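/- arXiv:alg-geom/9304006 — 2 statements merged into one kernel-verified Lean document; each statement's English description precedes it below -/
import Mathlib

section
/- For every τ in the upper half plane ℍ, the theta constants θ01(0,τ) and θ10(0,τ) are nonzero; equivalently, jacobiTheta₂ (1/2) τ ≠ 0 and jacobiTheta₂ (τ/2) τ ≠ 0. -/
open Complex

/-- The theta function with characteristics `a, b ∈ ℝ`:
`θ[a,b](z,τ) = exp(πi a² τ + 2πi a (z+b)) · θ₂(z + aτ + b, τ)`. -/
noncomputable def thetaChar (a b : ℝ) (z τ : ℂ) : ℂ :=
  Complex.exp (Real.pi * Complex.I * (a : ℂ) ^ 2 * τ +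
      2 * Real.pi * Complex.I * (a : ℂ) * (z + (b : ℂ))) *
    jacobiTheta₂ (z + (a : ℂ) * τ + (b : ℂ)) τ

open Real

/-!
Writing `θ` for `jacobiTheta`, the product `θ(τ) θ(τ + 1)` is a sum over `(a, b) ∈ ℤ²` of
`(-1)^b exp(πi (a² + b²) τ)`. The terms with `a + b` odd cancel under `(a, b) ↦ (b, a)`, and the
others are indexed by `(m + n, m - n)`, which gives `θ(τ) θ(τ + 1) = θ(2τ + 1)²`. Hence a zero of
`θ` at `τ` produces zeros at points of arbitrarily large imaginary part, where `‖θ - 1‖ < 1`.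
Finally `θ₂(1/2, τ) = θ(τ + 1)`, and by the Jacobi imaginary transformation `θ₂(τ/2, τ)` is a
nonzero multiple of `θ₂(1/2, -1/τ)`.
-/

lemma tsum_indicator_even_add_eq_tsum_add_sub {α : Type*} [AddCommMonoid α] [TopologicalSpace α]
    (f : ℤ × ℤ → α) :
    ∑' p, {p : ℤ × ℤ | Even (p.1 + p.2)}.indicator f p =
      ∑' q : ℤ × ℤ, f (q.1 + q.2, q.1 - q.2) := by
  have hinj : Function.Injective fun q : ℤ × ℤ => (q.1 + q.2, q.1 - q.2) := by
    rintro ⟨m, n⟩ ⟨m', n'⟩ h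
    simp only [Prod.mk.injEq] at h ⊢
    omega
  rw [← hinj.tsum_eq]
  · refine tsum_congr fun q => Set.indicator_of_mem ?_ f
    exact ⟨q.1, by simp only; ring⟩
  · rintro ⟨a, b⟩ hab
    obtain ⟨k, hk⟩ : Even (a + b) := by
      by_contra h
      exact hab (Set.indicator_of_notMem (s := {p : ℤ × ℤ | Even (p.1 + p.2)}) h f)
    exact ⟨(k, a - k), by simp only [Prod.mk.injEq]; omega⟩

lemma tsum_indicator_odd_add_eq_zero {α : Type*} [AddCommGroup α] [TopologicalSpace α]
    [IsTopologicalAddGroup α] [T2Space α] [IsAddTorsionFree α] {f : ℤ × ℤ → α}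
    (hf : ∀ a b, Odd (a + b) → f (b, a) = -f (a, b)) :
    ∑' p, {p : ℤ × ℤ | Odd (p.1 + p.2)}.indicator f p = 0 := by
  set g := {p : ℤ × ℤ | Odd (p.1 + p.2)}.indicator f
  have hswap : ∀ p, g p.swap = -g p := by
    rintro ⟨a, b⟩
    simp only [g, Set.indicator_apply, Set.mem_ofPred_eq, Prod.swap_prod_mk, add_comm b a]
    split_ifs with h
    · exact hf a b h
    · exact neg_zero.symm
  refine self_eq_neg.mp ?_
  calc ∑' p, g p = ∑' p, g (Equiv.prodComm ℤ ℤ p) := ((Equiv.prodComm ℤ ℤ).tsum_eq g).symm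
    _ = -∑' p, g p := by simp only [Equiv.prodComm_apply, hswap, tsum_neg]

lemma tsum_eq_tsum_add_sub_of_odd_antisymm {α : Type*} [UniformSpace α] [AddCommGroup α]
    [IsUniformAddGroup α] [CompleteSpace α] [T2Space α] [IsAddTorsionFree α]
    {f : ℤ × ℤ → α} (hf : Summable f) (hodd : ∀ a b, Odd (a + b) → f (b, a) = -f (a, b)) :
    ∑' p, f p = ∑' q : ℤ × ℤ, f (q.1 + q.2, q.1 - q.2) := by
  set E := {p : ℤ × ℤ | Even (p.1 + p.2)}
  have hcompl : Eᶜ = {p | Odd (p.1 + p.2)} := by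
    ext p; simp [E]
  calc ∑' p, f p = ∑' p, (E.indicator f p + Eᶜ.indicator f p) := by
        simp only [Set.indicator_self_add_compl_apply]
    _ = ∑' q : ℤ × ℤ, f (q.1 + q.2, q.1 - q.2) := by
      rw [(hf.indicator _).tsum_add (hf.indicator _), hcompl,
        tsum_indicator_even_add_eq_tsum_add_sub, tsum_indicator_odd_add_eq_zero hodd, add_zero]

lemma summable_norm_cexp_mul_sq {τ : ℂ} (hτ : 0 < τ.im) :
    Summable fun n : ℤ => ‖cexp (π * I * n ^ 2 * τ)‖ := by
  refine summable_norm_iff.mpr ?_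
  simpa [jacobiTheta₂_term] using (summable_jacobiTheta₂_term_iff 0 τ).mpr hτ

lemma jacobiTheta₂_half_eq_jacobiTheta_add_one (τ : ℂ) :
    jacobiTheta₂ (1 / 2) τ = jacobiTheta (τ + 1) := by
  refine tsum_congr fun n => ?_
  obtain ⟨k, hk⟩ := Int.even_mul_pred_self n
  refine exp_eq_exp_iff_exists_int.mpr ⟨-k, ?_⟩
  have hk' : (n : ℂ) * (n - 1) = k + k := by exact_mod_cast hk
  push_cast
  linear_combination (-π * I) * hk'

lemma cexp_sq_mul_cexp_sq_add_one_swap_of_odd {a b : ℤ} (h : Odd (a + b)) (τ : ℂ) :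
    cexp (π * I * b ^ 2 * τ) * cexp (π * I * a ^ 2 * (τ + 1)) =
      -(cexp (π * I * a ^ 2 * τ) * cexp (π * I * b ^ 2 * (τ + 1))) := by
  obtain ⟨k, hk⟩ : Odd (a ^ 2 - b ^ 2) := by
    rw [sq_sub_sq, show a - b = a + b - 2 * b by ring]
    exact h.mul (h.sub_even (even_two_mul b))
  have hk' : (a : ℂ) ^ 2 - b ^ 2 = 2 * k + 1 := by exact_mod_cast hk
  rw [← neg_one_mul, ← exp_pi_mul_I, ← Complex.exp_add, ← Complex.exp_add, ← Complex.exp_add]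
  refine exp_eq_exp_iff_exists_int.mpr ⟨k, ?_⟩
  linear_combination (π * I) * hk'

lemma cexp_sq_mul_cexp_sq_two_mul_add_one (m n : ℤ) (τ : ℂ) :
    cexp (π * I * m ^ 2 * (2 * τ + 1)) * cexp (π * I * n ^ 2 * (2 * τ + 1)) =
      cexp (π * I * ((m + n : ℤ) : ℂ) ^ 2 * τ) *
        cexp (π * I * ((m - n : ℤ) : ℂ) ^ 2 * (τ + 1)) := by
  rw [← Complex.exp_add, ← Complex.exp_add]
  refine exp_eq_exp_iff_exists_int.mpr ⟨m * n, ?_⟩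
  push_cast
  ring

lemma jacobiTheta_mul_jacobiTheta_add_one {τ : ℂ} (hτ : 0 < τ.im) :
    jacobiTheta τ * jacobiTheta (τ + 1) = jacobiTheta (2 * τ + 1) ^ 2 := by
  have h₀ := summable_norm_cexp_mul_sq hτ
  have h₁ := summable_norm_cexp_mul_sq (τ := τ + 1) (by simpa using hτ)
  have h₂ := summable_norm_cexp_mul_sq (τ := 2 * τ + 1) (by simpa using hτ)
  have hs := summable_mul_of_summable_norm h₀ h₁
  calc jacobiTheta τ * jacobiTheta (τ + 1)
      = ∑' p : ℤ × ℤ, cexp (π * I * p.1 ^ 2 * τ) * cexp (π * I * p.2 ^ 2 * (τ + 1)) :=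
        tsum_mul_tsum_of_summable_norm h₀ h₁
    _ = ∑' q : ℤ × ℤ, cexp (π * I * ((q.1 + q.2 : ℤ) : ℂ) ^ 2 * τ) *
          cexp (π * I * ((q.1 - q.2 : ℤ) : ℂ) ^ 2 * (τ + 1)) :=
        tsum_eq_tsum_add_sub_of_odd_antisymm hs fun _ _ h =>
          cexp_sq_mul_cexp_sq_add_one_swap_of_odd h τ
    _ = ∑' q : ℤ × ℤ, cexp (π * I * q.1 ^ 2 * (2 * τ + 1)) *
          cexp (π * I * q.2 ^ 2 * (2 * τ + 1)) :=
        tsum_congr fun q => (cexp_sq_mul_cexp_sq_two_mul_add_one q.1 q.2 τ).symm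
    _ = jacobiTheta (2 * τ + 1) ^ 2 :=
        (tsum_mul_tsum_of_summable_norm h₂ h₂).symm.trans (sq _).symm

lemma jacobiTheta_ne_zero_of_one_le_im {τ : ℂ} (hτ : 1 ≤ τ.im) : jacobiTheta τ ≠ 0 := by
  set r := rexp (-π * τ.im)
  have hr3 : 3 * r < 1 := by
    have h3 : 3 < rexp (π * τ.im) := by
      nlinarith [Real.add_one_le_exp (π * τ.im), pi_gt_three]
    have : r * rexp (π * τ.im) = 1 := by rw [← Real.exp_add]; simp
    nlinarith [Real.exp_pos (-π * τ.im)]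
  have hbound : ‖jacobiTheta τ - 1‖ < 1 := by
    refine (norm_jacobiTheta_sub_one_le (by linarith)).trans_lt ?_
    rw [div_mul_eq_mul_div, div_lt_one (by linarith)]
    linarith
  intro h
  simp [h] at hbound

lemma jacobiTheta_ne_zero_of_one_le_two_pow_mul_im (n : ℕ) {τ : ℂ} (hτ : 1 ≤ 2 ^ n * τ.im) :
    jacobiTheta τ ≠ 0 := by
  induction n generalizing τ with
  | zero => simpa using jacobiTheta_ne_zero_of_one_le_im (by simpa using hτ)
  | succ n ih =>
    have hpos : 0 < τ.im := pos_of_mul_pos_right (one_pos.trans_le hτ) (by positivity)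
    have him : (2 * τ + 1).im = 2 * τ.im := by simp
    have hdouble : jacobiTheta (2 * τ + 1) ≠ 0 := ih (by rwa [him, ← mul_assoc, ← pow_succ])
    refine left_ne_zero_of_mul (b := jacobiTheta (τ + 1)) ?_
    rw [jacobiTheta_mul_jacobiTheta_add_one hpos]
    exact pow_ne_zero 2 hdouble

theorem jacobiTheta_ne_zero {τ : ℂ} (hτ : 0 < τ.im) : jacobiTheta τ ≠ 0 := by
  obtain ⟨n, hn⟩ := pow_unbounded_of_one_lt τ.im⁻¹ one_lt_two
  refine jacobiTheta_ne_zero_of_one_le_two_pow_mul_im n ?_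
  rw [← inv_mul_cancel₀ hτ.ne']
  exact mul_le_mul_of_nonneg_right hn.le hτ.le

lemma jacobiTheta₂_half_ne_zero {τ : ℂ} (hτ : 0 < τ.im) : jacobiTheta₂ (1 / 2) τ ≠ 0 := by
  rw [jacobiTheta₂_half_eq_jacobiTheta_add_one]
  exact jacobiTheta_ne_zero (by simpa using hτ)

lemma jacobiTheta₂_self_div_two_ne_zero {τ : ℂ} (hτ : 0 < τ.im) :
    jacobiTheta₂ (τ / 2) τ ≠ 0 := by
  have hτ0 : τ ≠ 0 := fun h => by simp [h] at hτ
  have him : 0 < (-1 / τ).im := by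
    simpa [neg_div, one_div, inv_neg] using UpperHalfPlane.im_inv_neg_coe_pos ⟨τ, hτ⟩
  have hsqrt : (-I * τ) ^ (1 / 2 : ℂ) ≠ 0 := by
    rw [Ne, cpow_eq_zero_iff, not_and_or]
    exact Or.inl (mul_ne_zero (neg_ne_zero.mpr I_ne_zero) hτ0)
  rw [jacobiTheta₂_functional_equation, div_div_cancel_left' hτ0, ← one_div]
  exact mul_ne_zero (mul_ne_zero (one_div_ne_zero hsqrt) (Complex.exp_ne_zero _))
    (jacobiTheta₂_half_ne_zero him)

lemma thetaChar_ne_zero_iff (a b : ℝ) (z τ : ℂ) :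
    thetaChar a b z τ ≠ 0 ↔ jacobiTheta₂ (z + a * τ + b) τ ≠ 0 := by
  simp [thetaChar, Complex.exp_ne_zero]

/-- for every τ in the upper half plane, the theta constants θ01(0,τ) and
θ10(0,τ) are nonzero; equivalently `jacobiTheta₂ (1/2) τ ≠ 0` and `jacobiTheta₂ (τ/2) τ ≠ 0`. -/
theorem theta_constants_ne_zero (τ : UpperHalfPlane) :
    thetaChar 0 (1 / 2) 0 (τ : ℂ) ≠ 0 ∧ thetaChar (1 / 2) 0 0 (τ : ℂ) ≠ 0 ∧
      jacobiTheta₂ (1 / 2) (τ : ℂ) ≠ 0 ∧ jacobiTheta₂ ((τ : ℂ) / 2) (τ : ℂ) ≠ 0 := by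
  have h01 := jacobiTheta₂_half_ne_zero τ.im_pos
  have h10 := jacobiTheta₂_self_div_two_ne_zero τ.im_pos
  refine ⟨?_, ?_, h01, h10⟩
  · simpa [thetaChar_ne_zero_iff] using h01
  · simpa [thetaChar_ne_zero_iff, div_eq_inv_mul] using h10
end

section
/- For every τ in the upper half plane ℍ (so that −1/τ ∈ ℍ as well), the function λ(τ) = −θ01(0,τ)⁴ / θ10(0,τ)⁴ satisfies λ(−1/τ) = 1/λ(τ). -/
open Complex

/-- `λ(τ) = −θ01(0,τ)⁴ / θ10(0,τ)⁴`. -/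
noncomputable def lambdaFun (τ : ℂ) : ℂ :=
  -(thetaChar 0 (1 / 2) 0 τ) ^ 4 / (thetaChar (1 / 2) 0 0 τ) ^ 4

/-!
Jacobi's imaginary transformation `θ₂(z/τ, -1/τ) = (-iτ)^{1/2} e^{πiz²/τ} θ₂(z, τ)`, applied at
`z = τ/2` and `z = 1/2`, shows that `τ ↦ -1/τ` exchanges the theta constants `θ01` and `θ10`
up to the common factor `(-iτ)^{1/2}`. That factor cancels in `λ`, which therefore inverts.
-/

lemma neg_I_mul_cpow_half_ne_zero {τ : ℂ} (hτ : τ ≠ 0) : (-I * τ) ^ (1 / 2 : ℂ) ≠ 0 := by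
  simp [cpow_eq_zero_iff, I_ne_zero, hτ]

lemma jacobiTheta₂_div_neg_inv {τ : ℂ} (hτ : τ ≠ 0) (z : ℂ) :
    jacobiTheta₂ (z / τ) (-1 / τ) =
      (-I * τ) ^ (1 / 2 : ℂ) * cexp (Real.pi * I * z ^ 2 / τ) * jacobiTheta₂ z τ := by
  have hexp : cexp (Real.pi * I * z ^ 2 / τ) * cexp (-Real.pi * I * z ^ 2 / τ) = 1 := by
    rw [← Complex.exp_add]
    convert Complex.exp_zero using 2
    ring
  calc jacobiTheta₂ (z / τ) (-1 / τ)
      = ((-I * τ) ^ (1 / 2 : ℂ) * (1 / (-I * τ) ^ (1 / 2 : ℂ))) *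
          (cexp (Real.pi * I * z ^ 2 / τ) * cexp (-Real.pi * I * z ^ 2 / τ)) *
          jacobiTheta₂ (z / τ) (-1 / τ) := by
        rw [mul_one_div_cancel (neg_I_mul_cpow_half_ne_zero hτ), hexp, one_mul, one_mul]
    _ = _ := by
        rw [jacobiTheta₂_functional_equation z τ]
        ring

lemma thetaChar_zero_half_zero (τ : ℂ) : thetaChar 0 (1 / 2) 0 τ = jacobiTheta₂ (1 / 2) τ := by
  simp [thetaChar]

lemma thetaChar_half_zero_zero (τ : ℂ) :
    thetaChar (1 / 2) 0 0 τ = cexp (Real.pi * I * τ / 4) * jacobiTheta₂ (τ / 2) τ := by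
  simp only [thetaChar]
  push_cast
  ring_nf

lemma thetaChar_zero_half_zero_neg_inv {τ : ℂ} (hτ : τ ≠ 0) :
    thetaChar 0 (1 / 2) 0 (-1 / τ) = (-I * τ) ^ (1 / 2 : ℂ) * thetaChar (1 / 2) 0 0 τ := by
  have h := jacobiTheta₂_div_neg_inv hτ (τ / 2)
  rw [div_div_cancel_left' hτ, one_div,
    show Real.pi * I * (τ / 2) ^ 2 / τ = Real.pi * I * τ / 4 by field_simp; ring] at h
  rw [thetaChar_zero_half_zero, thetaChar_half_zero_zero, one_div, h, mul_assoc]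

lemma thetaChar_half_zero_zero_neg_inv {τ : ℂ} (hτ : τ ≠ 0) :
    thetaChar (1 / 2) 0 0 (-1 / τ) = (-I * τ) ^ (1 / 2 : ℂ) * thetaChar 0 (1 / 2) 0 τ := by
  have h := jacobiTheta₂_div_neg_inv hτ (1 / 2)
  have hexp : cexp (Real.pi * I * (-1 / τ) / 4) * cexp (Real.pi * I * (1 / 2) ^ 2 / τ) = 1 := by
    rw [← Complex.exp_add]
    convert Complex.exp_zero using 2
    ring
  rw [thetaChar_half_zero_zero, thetaChar_zero_half_zero,
    show -1 / τ / 2 = -(1 / 2 / τ) by ring, jacobiTheta₂_neg_left, h]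
  linear_combination (-I * τ) ^ (1 / 2 : ℂ) * jacobiTheta₂ (1 / 2) τ * hexp

/-- for every τ in the upper half plane, `λ(−1/τ) = 1/λ(τ)`. -/
theorem lambdaFun_S_action (τ : UpperHalfPlane) :
    lambdaFun (-1 / (τ : ℂ)) = 1 / lambdaFun (τ : ℂ) := by
  rw [lambdaFun, lambdaFun, thetaChar_zero_half_zero_neg_inv τ.ne_zero,
    thetaChar_half_zero_zero_neg_inv τ.ne_zero, mul_pow, mul_pow, ← mul_neg,
    mul_div_mul_left _ _ (pow_ne_zero 4 (neg_I_mul_cpow_half_ne_zero τ.ne_zero)),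
    one_div_div, div_neg, neg_div]
end
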